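/- arXiv:1808.05780 — 6 statements merged into one kernel-verified Lean document; each statement's English description precedes it below -/
import Mathlib

section
/- Let T1, T2 be disjoint subsets of [n] and v ∈ R^n. Define T1# = {i : v_i > 0.5} and T2# = {i : v_i < -0.5}. If ‖(1_{T1} - 1_{T2}) - v‖_2 ≤ D, then |T1 △ T1#| + |T2 △ T2#| ≤ 4D². -/
/-!
Disjointness of `T1` and `T2` makes `u = 1_{T1} - 1_{T2}` a vector with entries in `{-1, 0, 1}`,
and `T1#`, `T2#` record where `v` rounds to `1` and to `-1`. Every coordinate at which the
rounding of `v i` disagrees with `u i` has `|u i - v i| ≥ 1/2`, and one lying in both symmetric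
differences has `|u i - v i| > 3/2`; so each coordinate contributes at most `4 (u i - v i)²`
to the left-hand side, and summing gives `4 ‖u - v‖² ≤ 4 D²`.
-/

open Finset

lemma indicator_xor_add_indicator_xor_le {p q : Prop} [Decidable p] [Decidable q]
    (hpq : ¬(p ∧ q)) (x : ℝ) :
    ((if Xor p (0.5 < x) then 1 else 0) + (if Xor q (x < -0.5) then 1 else 0) : ℝ) ≤
      4 * ((if p then 1 else 0) - (if q then 1 else 0) - x) ^ 2 := by
  by_cases hp : p <;> by_cases hq : q <;> simp only [hp, hq, Xor] at hpq ⊢ <;>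
    split_ifs <;> norm_num at * <;> nlinarith

lemma card_add_card_le_sum {ι : Type*} [Fintype ι] [DecidableEq ι] (s t : Finset ι)
    (f : ι → ℝ) (h : ∀ i, ((if i ∈ s then 1 else 0) + (if i ∈ t then 1 else 0) : ℝ) ≤ f i) :
    (#s + #t : ℝ) ≤ ∑ i, f i :=
  calc (#s + #t : ℝ) = ∑ i, ((if i ∈ s then 1 else 0) + (if i ∈ t then 1 else 0) : ℝ) := by
        simp [sum_add_distrib, sum_ite_mem]
    _ ≤ ∑ i, f i := sum_le_sum fun i _ => h i

/-- If `T1, T2 ⊆ [n]` are disjoint and `v ∈ ℝⁿ` satisfies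
`‖(1_{T1} - 1_{T2}) - v‖₂ ≤ D`, and `T1# = {i : v i > 0.5}`, `T2# = {i : v i < -0.5}`,
then `|T1 △ T1#| + |T2 △ T2#| ≤ 4 D²`. -/
theorem support_error (n : ℕ) (T1 T2 : Finset (Fin n)) (hdis : Disjoint T1 T2)
    (v : Fin n → ℝ) (D : ℝ)
    (hD : Real.sqrt (∑ i, (((if i ∈ T1 then (1 : ℝ) else 0) -
        (if i ∈ T2 then (1 : ℝ) else 0)) - v i) ^ 2) ≤ D) :
    ((symmDiff T1 (Finset.univ.filter fun i => 0.5 < v i)).card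
      + (symmDiff T2 (Finset.univ.filter fun i => v i < -0.5)).card : ℝ) ≤ 4 * D ^ 2 := by
  set f : Fin n → ℝ := fun i => (((if i ∈ T1 then (1 : ℝ) else 0) -
      (if i ∈ T2 then (1 : ℝ) else 0)) - v i) ^ 2
  have hf : ∑ i, f i ≤ D ^ 2 := (Real.sqrt_le_iff.mp hD).2
  calc _ ≤ ∑ i, 4 * f i := card_add_card_le_sum _ _ _ fun i => by
          convert indicator_xor_add_indicator_xor_le
              (fun h => disjoint_left.mp hdis h.1 h.2) (v i) using 3 <;>
            simp only [mem_symmDiff, mem_filter, mem_univ, true_and, Xor]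
    _ ≤ 4 * D ^ 2 := by rw [← mul_sum]; linarith
end

section
/- Let G be a graph whose vertex set is partitioned into disjoint clusters C_1,...,C_k with n_1 = min_a |C_a|, and let L^in be the Laplacian of the subgraph G^in consisting only of within-cluster edges (so the connected components of G^in include the C_a, each C_a inducing a connected subgraph). Let Ω ⊂ V, let a ∈ [k], set U = C_a \ Ω, W = Ω \ C_a, and y^in = L^in 1_Ω. If |C_a △ Ω| ≤ s < n_1/2, then x = 1_W - 1_U is the unique minimizer of ‖L^in x - y^in‖_2 subject to ‖x‖_0 ≤ s (in fact the unique s-sparse solution of L^in x = y^in). -/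
/-! The vector `1_Ω - 1_{C a}` equals `x₀ = 1_W - 1_U` and differs from `1_Ω` by a kernel
vector, so it solves `Lin x = Lin 1_Ω`, and its support is `C a △ Ω`.  If `v` is another
`s`-sparse solution, `v - x₀` lies in the kernel, so it is constant on every cluster, and its
support has at most `2 s` elements.  Since every cluster has more than `2 s` vertices, each of
these constants vanishes. -/

open Function

section ClusterIndicator

variable {ι κ R : Type*}

theorem ite_sdiff_sub_ite_sdiff [DecidableEq ι] [Ring R] (s t : Finset ι) :
    (fun i => (if i ∈ t \ s then (1 : R) else 0) - (if i ∈ s \ t then (1 : R) else 0)) =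
      (fun i => if i ∈ t then (1 : R) else 0) - fun i => if i ∈ s then (1 : R) else 0 := by
  funext i
  by_cases hs : i ∈ s <;> by_cases ht : i ∈ t <;> simp [hs, ht]

theorem support_ite_sub_ite_subset [DecidableEq ι] [Ring R] (s t : Finset ι) :
    (support fun i =>
      (if i ∈ t \ s then (1 : R) else 0) - (if i ∈ s \ t then (1 : R) else 0)) ⊆
        ↑(symmDiff s t) := by
  intro i hi
  rw [mem_support] at hi
  rw [Finset.coe_symmDiff, Set.mem_symmDiff, Finset.mem_coe, Finset.mem_coe]
  by_cases hs : i ∈ s <;> by_cases ht : i ∈ t <;> simp_all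

theorem sum_smul_ite_mem_apply [DecidableEq ι] [Fintype κ] [Semiring R] {C : κ → Finset ι}
    (hC : Pairwise (Disjoint on C)) (α : κ → R) {b : κ} {i : ι} (hi : i ∈ C b) :
    (∑ c, α c • fun j => if j ∈ C c then (1 : R) else 0) i = α b := by
  rw [Finset.sum_apply, Finset.sum_eq_single b]
  · simp [hi]
  · intro c _ hcb
    simp [Finset.disjoint_left.mp (hC hcb.symm) hi]
  · simp

theorem sum_smul_ite_mem_eq_zero_of_ncard_support_lt [DecidableEq ι] [Finite ι] [Fintype κ]
    [Semiring R] {C : κ → Finset ι} (hC : Pairwise (Disjoint on C)) (α : κ → R)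
    (hsupp : ∀ b, (support
      (∑ c, α c • fun j => if j ∈ C c then (1 : R) else 0)).ncard < (C b).card) :
    (∑ c, α c • fun j => if j ∈ C c then (1 : R) else 0) = 0 := by
  have hα : ∀ b, α b = 0 := by
    intro b
    by_contra hb
    have hsub : (↑(C b) : Set ι) ⊆
        support (∑ c, α c • fun j => if j ∈ C c then (1 : R) else 0) :=
      fun i hi => by rwa [mem_support, sum_smul_ite_mem_apply hC α hi]
    have := Set.ncard_le_ncard hsub
    rw [Set.ncard_coe_finset] at this
    exact (hsupp b).not_ge this
  simp [hα]

end ClusterIndicator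

theorem unique_sparse_solution_general (n k : ℕ) (C : Fin k → Finset (Fin n))
    (hdis : ∀ a b, a ≠ b → Disjoint (C a) (C b))
    (Lin : Matrix (Fin n) (Fin n) ℝ)
    (hker : ∀ x : Fin n → ℝ, Lin.mulVec x = 0 ↔
      ∃ α : Fin k → ℝ, x = ∑ b, α b • (fun i => if i ∈ C b then (1 : ℝ) else 0))
    (a : Fin k) (Ω : Finset (Fin n)) (s : ℕ)
    (hs1 : (symmDiff (C a) Ω).card ≤ s) (hs2 : ∀ b, 2 * s < (C b).card) :
    Lin.mulVec (fun i => (if i ∈ Ω \ C a then (1 : ℝ) else 0) -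
        (if i ∈ C a \ Ω then (1 : ℝ) else 0)) =
      Lin.mulVec (fun i => if i ∈ Ω then (1 : ℝ) else 0) ∧
    (Function.support fun i => (if i ∈ Ω \ C a then (1 : ℝ) else 0) -
        (if i ∈ C a \ Ω then (1 : ℝ) else 0)).ncard ≤ s ∧
    ∀ v : Fin n → ℝ, (Function.support v).ncard ≤ s →
      Lin.mulVec v = Lin.mulVec (fun i => if i ∈ Ω then (1 : ℝ) else 0) →
      v = fun i => (if i ∈ Ω \ C a then (1 : ℝ) else 0) -
        (if i ∈ C a \ Ω then (1 : ℝ) else 0) := by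
  set x₀ : Fin n → ℝ := fun i => (if i ∈ Ω \ C a then (1 : ℝ) else 0) -
    (if i ∈ C a \ Ω then (1 : ℝ) else 0) with hx₀
  set xΩ : Fin n → ℝ := fun i => if i ∈ Ω then (1 : ℝ) else 0
  have hCa : Lin.mulVec (fun i => if i ∈ C a then (1 : ℝ) else 0) = 0 :=
    (hker _).mpr ⟨Pi.single a 1, by simp [Pi.single_apply]⟩
  have hsol : Lin.mulVec x₀ = Lin.mulVec xΩ := by
    rw [hx₀, ite_sdiff_sub_ite_sdiff, Matrix.mulVec_sub, hCa, sub_zero]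
  have hsparse : (support x₀).ncard ≤ s :=
    (Set.ncard_le_ncard (support_ite_sub_ite_subset (C a) Ω)).trans
      ((Set.ncard_coe_finset _).trans_le hs1)
  refine ⟨hsol, hsparse, fun v hv hLv => ?_⟩
  obtain ⟨α, hα⟩ := (hker (v - x₀)).mp (by rw [Matrix.mulVec_sub, hLv, hsol, sub_self])
  have hdiff_sparse : ∀ b, (support (v - x₀)).ncard < (C b).card := fun b =>
    ((Set.ncard_le_ncard (support_sub _ _)).trans
      ((Set.ncard_union_le _ _).trans (add_le_add hv hsparse))).trans_lt (two_mul s ▸ hs2 b)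
  rw [hα] at hdiff_sparse
  exact sub_eq_zero.mp
    (hα.trans (sum_smul_ite_mem_eq_zero_of_ncard_support_lt hdis α hdiff_sparse))

/-- Let the vertex set `[n]` be partitioned into disjoint clusters
`C 0, …, C (k-1)`, and let `Lin` be the Laplacian of the within-cluster subgraph, so
that the kernel of `Lin` is spanned by the cluster indicator vectors.  Let `Ω ⊆ [n]`,
`U = C a \ Ω`, `W = Ω \ C a`, and `y^in = Lin 1_Ω`.  If `|C a △ Ω| ≤ s < n₁/2`
(where `n₁ = min_b |C b|`, encoded as `2s < |C b|` for every `b`), then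
`x₀ = 1_W - 1_U` is the unique `s`-sparse solution of `Lin x = y^in` (hence the
unique minimizer of `‖Lin x - y^in‖₂` subject to `‖x‖₀ ≤ s`). -/
theorem unique_sparse_solution (n k : ℕ) (C : Fin k → Finset (Fin n))
    (hdis : ∀ a b, a ≠ b → Disjoint (C a) (C b)) (hcov : ∀ i, ∃ a, i ∈ C a)
    (Lin : Matrix (Fin n) (Fin n) ℝ)
    (hker : ∀ x : Fin n → ℝ, Lin.mulVec x = 0 ↔
      ∃ α : Fin k → ℝ, x = ∑ b, α b • (fun i => if i ∈ C b then (1 : ℝ) else 0))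
    (a : Fin k) (Ω : Finset (Fin n)) (s : ℕ)
    (hs1 : (symmDiff (C a) Ω).card ≤ s) (hs2 : ∀ b, 2 * s < (C b).card) :
    Lin.mulVec (fun i => (if i ∈ Ω \ C a then (1 : ℝ) else 0) -
        (if i ∈ C a \ Ω then (1 : ℝ) else 0)) =
      Lin.mulVec (fun i => if i ∈ Ω then (1 : ℝ) else 0) ∧
    (Function.support fun i => (if i ∈ Ω \ C a then (1 : ℝ) else 0) -
        (if i ∈ C a \ Ω then (1 : ℝ) else 0)).ncard ≤ s ∧
    ∀ v : Fin n → ℝ, (Function.support v).ncard ≤ s →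
      Lin.mulVec v = Lin.mulVec (fun i => if i ∈ Ω then (1 : ℝ) else 0) →
      v = fun i => (if i ∈ Ω \ C a then (1 : ℝ) else 0) -
        (if i ∈ C a \ Ω then (1 : ℝ) else 0) :=
  unique_sparse_solution_general n k C hdis Lin hker a Ω s hs1 hs2
end

section
/- Let L^in be a block-diagonal matrix with diagonal blocks B_1,...,B_k (each B_a of size n_a × n_a, indexed by a partition of [n]). Then for any s, the s-restricted isometry constant satisfies δ_s(L^in) = max_a δ_s(B_a). -/
open Matrix

/-- The `s`-restricted isometry constant of a matrix `Φ`. -/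
noncomputable def ric {ι κ : Type*} [Fintype ι] [Fintype κ]
    (Φ : Matrix ι κ ℝ) (s : ℕ) : ℝ :=
  sInf {δ : ℝ | 0 ≤ δ ∧ ∀ x : κ → ℝ, (Function.support x).ncard ≤ s →
    (1 - δ) * ∑ j, x j ^ 2 ≤ ∑ i, (Φ.mulVec x i) ^ 2 ∧
    ∑ i, (Φ.mulVec x i) ^ 2 ≤ (1 + δ) * ∑ j, x j ^ 2}

/-! The set of admissible constants is a closed, nonempty, upward closed subset of `[0, ∞)`,
so it is the ray `[ric Φ s, ∞)`. For a block-diagonal matrix a sparse vector splits into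
sparse blocks whose squared norms add up, so a constant is admissible for the whole matrix
exactly when it is admissible for every block, and the two rays coincide. -/

section RIP

variable {ι κ : Type*} [Fintype ι] [Fintype κ]

def IsRIPBound (Φ : Matrix ι κ ℝ) (s : ℕ) (δ : ℝ) : Prop :=
  ∀ x : κ → ℝ, (Function.support x).ncard ≤ s →
    (1 - δ) * ∑ j, x j ^ 2 ≤ ∑ i, (Φ *ᵥ x) i ^ 2 ∧ ∑ i, (Φ *ᵥ x) i ^ 2 ≤ (1 + δ) * ∑ j, x j ^ 2

lemma IsRIPBound.mono {Φ : Matrix ι κ ℝ} {s : ℕ} {δ δ' : ℝ} (h : IsRIPBound Φ s δ)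
    (hδ : δ ≤ δ') : IsRIPBound Φ s δ' := by
  intro x hx
  have hx₀ : 0 ≤ ∑ j, x j ^ 2 := by positivity
  obtain ⟨hlow, hup⟩ := h x hx
  constructor <;> nlinarith

lemma sum_sq_mulVec_le (Φ : Matrix ι κ ℝ) (x : κ → ℝ) :
    ∑ i, (Φ *ᵥ x) i ^ 2 ≤ (∑ i, ∑ j, Φ i j ^ 2) * ∑ j, x j ^ 2 := by
  rw [Finset.sum_mul]
  exact Finset.sum_le_sum fun i _ => Finset.sum_mul_sq_le_sq_mul_sq _ (Φ i) x

lemma isRIPBound_one_add_sum_sq (Φ : Matrix ι κ ℝ) (s : ℕ) :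
    IsRIPBound Φ s (1 + ∑ i, ∑ j, Φ i j ^ 2) := by
  intro x _
  have hx₀ : 0 ≤ ∑ j, x j ^ 2 := by positivity
  have hΦ₀ : 0 ≤ ∑ i, ∑ j, Φ i j ^ 2 := by positivity
  have hΦx₀ : 0 ≤ ∑ i, (Φ *ᵥ x) i ^ 2 := by positivity
  have := sum_sq_mulVec_le Φ x
  constructor <;> nlinarith

lemma isClosed_setOf_isRIPBound (Φ : Matrix ι κ ℝ) (s : ℕ) :
    IsClosed {δ | IsRIPBound Φ s δ} := by
  simp only [IsRIPBound, Set.ofPred_forall, Set.ofPred_and]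
  exact isClosed_iInter fun x => isClosed_iInter fun _ =>
    (isClosed_le (by fun_prop) continuous_const).inter (isClosed_le continuous_const (by fun_prop))

lemma ric_le_iff {Φ : Matrix ι κ ℝ} {s : ℕ} {δ : ℝ} :
    ric Φ s ≤ δ ↔ 0 ≤ δ ∧ IsRIPBound Φ s δ := by
  set S := {δ | 0 ≤ δ ∧ IsRIPBound Φ s δ}
  have hbdd : BddBelow S := ⟨0, fun _ h => h.1⟩
  have hne : S.Nonempty := ⟨_, by positivity, isRIPBound_one_add_sum_sq Φ s⟩
  have hmem : ric Φ s ∈ S :=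
    ((isClosed_le continuous_const continuous_id).inter
      (isClosed_setOf_isRIPBound Φ s)).csInf_mem hne hbdd
  exact ⟨fun h => ⟨hmem.1.trans h, hmem.2.mono h⟩, fun h => csInf_le hbdd h⟩

end RIP

section Block

variable {o : Type*} [Fintype o] {m n : o → Type*}

lemma sum_blocks_extend_sigma_mk (a : o) (y : n a → ℝ) (f : ∀ c, (n c → ℝ) → ℝ)
    (hf : ∀ c, f c 0 = 0) :
    ∑ c, f c (fun j => Function.extend (Sigma.mk a) y 0 ⟨c, j⟩) = f a y := by
  rw [Fintype.sum_eq_single a fun c hc => ?_]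
  · congr 1
    exact funext fun j => sigma_mk_injective.extend_apply y 0 j
  · have hzero : (fun j => Function.extend (Sigma.mk a) y 0 ⟨c, j⟩) = 0 :=
      funext fun j => Function.extend_apply' _ _ _ fun ⟨_, hi⟩ => hc (congrArg Sigma.fst hi).symm
    rw [hzero, hf]

variable [∀ a, Fintype (n a)]

lemma ncard_support_block_le (x : (Σ a, n a) → ℝ) (a : o) :
    (Function.support (fun i => x ⟨a, i⟩)).ncard ≤ (Function.support x).ncard := by
  rw [← Set.ncard_image_of_injective _ sigma_mk_injective]
  exact Set.ncard_le_ncard (by rintro _ ⟨i, hi, rfl⟩; exact hi) (Set.toFinite _)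

variable [DecidableEq o]

lemma blockDiagonal'_mulVec_apply (B : ∀ a, Matrix (m a) (n a) ℝ)
    (x : (Σ a, n a) → ℝ) (a : o) (i : m a) :
    (blockDiagonal' B *ᵥ x) ⟨a, i⟩ = (B a *ᵥ fun j => x ⟨a, j⟩) i := by
  simp only [mulVec, dotProduct, Fintype.sum_sigma]
  rw [Fintype.sum_eq_single a fun c hc => Finset.sum_eq_zero fun j _ => by
    rw [blockDiagonal'_apply_ne _ _ _ hc.symm, zero_mul]]
  simp only [blockDiagonal'_apply_eq]

variable [∀ a, Fintype (m a)]

lemma sum_sq_blockDiagonal'_mulVec (B : ∀ a, Matrix (m a) (n a) ℝ) (x : (Σ a, n a) → ℝ) :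
    ∑ p, (blockDiagonal' B *ᵥ x) p ^ 2 = ∑ a, ∑ i, (B a *ᵥ fun j => x ⟨a, j⟩) i ^ 2 := by
  simp only [Fintype.sum_sigma, blockDiagonal'_mulVec_apply]

lemma isRIPBound_blockDiagonal'_iff {B : ∀ a, Matrix (m a) (n a) ℝ} {s : ℕ} {δ : ℝ} :
    IsRIPBound (blockDiagonal' B) s δ ↔ ∀ a, IsRIPBound (B a) s δ := by
  constructor
  · intro h a y hy
    have hsupp : (Function.support (Function.extend (Sigma.mk a) y 0)).ncard ≤ s := by
      rwa [Function.support_extend_zero sigma_mk_injective,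
        Set.ncard_image_of_injective _ sigma_mk_injective]
    have hx := h _ hsupp
    rwa [sum_sq_blockDiagonal'_mulVec, Fintype.sum_sigma,
      sum_blocks_extend_sigma_mk a y (fun c z => ∑ i, (B c *ᵥ z) i ^ 2) (by simp),
      sum_blocks_extend_sigma_mk a y (fun c z => ∑ i, z i ^ 2) (by simp)] at hx
  · intro h x hx
    have hblock a := h a (fun i => x ⟨a, i⟩) ((ncard_support_block_le x a).trans hx)
    rw [sum_sq_blockDiagonal'_mulVec, Fintype.sum_sigma, Finset.mul_sum, Finset.mul_sum]
    exact ⟨Finset.sum_le_sum fun a _ => (hblock a).1, Finset.sum_le_sum fun a _ => (hblock a).2⟩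

end Block

/-- For a block-diagonal matrix with diagonal blocks
`B 0, …, B (k-1)`, the `s`-restricted isometry constant equals the maximum of the
`s`-restricted isometry constants of the blocks. -/
theorem ric_blockDiagonal (k : ℕ) (hk : 0 < k) (sz : Fin k → ℕ)
    (B : ∀ a : Fin k, Matrix (Fin (sz a)) (Fin (sz a)) ℝ) (s : ℕ) :
    ric (Matrix.blockDiagonal' B) s =
      Finset.univ.sup' ⟨⟨0, hk⟩, Finset.mem_univ _⟩ (fun a => ric (B a) s) := by
  have : Nonempty (Fin k) := ⟨⟨0, hk⟩⟩
  refine eq_of_forall_ge_iff fun δ => ?_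
  refine Iff.trans ?_ (Finset.sup'_le_iff _ _).symm
  simp only [Finset.mem_univ, ric_le_iff, isRIPBound_blockDiagonal'_iff,
    forall_and, forall_const]
end

section
/- Let A = A^in + A^out be the decomposition of the adjacency matrix of a graph with positive degrees d_i = d_i^in + d_i^out, let P = A D^{-1} and P^in = A^in (D^in)^{-1}, and let Q be the diagonal matrix with entries q_i = d_i^in/d_i. Then P = P^in Q + A^out D^{-1}, and consequently, for every nonnegative vector x and every t ≥ 1, P^t x ≥ q_min^t (P^in)^t x entrywise, where q_min = min_i q_i. -/
open Matrix

/-! Splitting `A = A^in + A^out` column by column gives `P = P^in Q + A^out D⁻¹` with every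
term entrywise nonnegative, so `q_min P^in ≤ P` entrywise. Powers of nonnegative matrices are
monotone in this order when applied to nonnegative vectors, whence `q_min^t (P^in)^t x ≤ P^t x`. -/

namespace Matrix

section Nonneg

variable {ι R : Type*} [Fintype ι] [CommSemiring R] [PartialOrder R]
  [IsOrderedRing R] {M N : Matrix ι ι R} {x : ι → R}

theorem mulVec_nonneg (hM : ∀ i j, 0 ≤ M i j) (hx : 0 ≤ x) : 0 ≤ M *ᵥ x :=
  fun i => dotProduct_nonneg_of_nonneg (hM i) hx

theorem mulVec_le_mulVec {u v : ι → R} (hM : ∀ i j, 0 ≤ M i j) (hMN : ∀ i j, M i j ≤ N i j)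
    (huv : u ≤ v) (hv : 0 ≤ v) : M *ᵥ u ≤ N *ᵥ v := fun i =>
  calc M i ⬝ᵥ u ≤ M i ⬝ᵥ v := dotProduct_le_dotProduct_of_nonneg_left huv (hM i)
    _ ≤ N i ⬝ᵥ v := dotProduct_le_dotProduct_of_nonneg_right (hMN i) hv

theorem pow_mulVec_nonneg [DecidableEq ι] (hM : ∀ i j, 0 ≤ M i j) (hx : 0 ≤ x) (t : ℕ) : 0 ≤ (M ^ t) *ᵥ x := by
  induction t with
  | zero => simpa using hx
  | succ t ih =>
    rw [pow_succ', ← mulVec_mulVec]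
    exact mulVec_nonneg hM ih

theorem pow_mulVec_le_pow_mulVec [DecidableEq ι] (hM : ∀ i j, 0 ≤ M i j) (hMN : ∀ i j, M i j ≤ N i j)
    (hx : 0 ≤ x) (t : ℕ) : (M ^ t) *ᵥ x ≤ (N ^ t) *ᵥ x := by
  have hN : ∀ i j, 0 ≤ N i j := fun i j => (hM i j).trans (hMN i j)
  induction t with
  | zero => rfl
  | succ t ih =>
    rw [pow_succ', pow_succ', ← mulVec_mulVec, ← mulVec_mulVec]
    exact mulVec_le_mulVec hM hMN ih (pow_mulVec_nonneg hN hx t)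

end Nonneg

theorem mul_diagonal_inv_mul_diagonal_div {m ι K : Type*} [Fintype ι] [DecidableEq ι] [Field K]
    (A : Matrix m ι K) {a : ι → K} (ha : ∀ j, a j ≠ 0) (b : ι → K) :
    (A * diagonal fun j => (a j)⁻¹) * diagonal (fun j => a j / b j) =
      A * diagonal fun j => (b j)⁻¹ := by
  rw [Matrix.mul_assoc, diagonal_mul_diagonal]
  congr 2
  funext j
  field_simp [ha j]

end Matrix

theorem transition_decomposition_general (n : ℕ) (Ain Aout : Matrix (Fin n) (Fin n) ℝ)
    (hAinn : ∀ i j, 0 ≤ Ain i j) (hAoutn : ∀ i j, 0 ≤ Aout i j)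
    (din dout d q : Fin n → ℝ)
    (hdout : ∀ j, dout j = ∑ i, Aout i j)
    (hd : ∀ j, d j = din j + dout j) (hdinpos : ∀ j, 0 < din j)
    (hq : ∀ j, q j = din j / d j)
    (qmin : ℝ) (hqmin : ∀ j, qmin ≤ q j) (hqmin0 : 0 ≤ qmin) :
    (Ain + Aout) * Matrix.diagonal (fun j => (d j)⁻¹) =
      (Ain * Matrix.diagonal fun j => (din j)⁻¹) * Matrix.diagonal q +
        Aout * Matrix.diagonal (fun j => (d j)⁻¹) ∧
    ∀ x : Fin n → ℝ, (∀ i, 0 ≤ x i) → ∀ t : ℕ, 1 ≤ t → ∀ i,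
      qmin ^ t * (((Ain * Matrix.diagonal fun j => (din j)⁻¹) ^ t).mulVec x i) ≤
        (((Ain + Aout) * Matrix.diagonal fun j => (d j)⁻¹) ^ t).mulVec x i := by
  obtain rfl : q = fun j => din j / d j := funext hq
  have hsplit := (Ain.mul_diagonal_inv_mul_diagonal_div (fun j => (hdinpos j).ne') d).symm
  have hdecomp := (Matrix.add_mul Ain Aout _).trans (congrArg (· + _) hsplit)
  refine ⟨hdecomp, fun x hx t _ i => ?_⟩
  set Pin := Ain * diagonal fun j => (din j)⁻¹
  have hPin : ∀ i j, 0 ≤ Pin i j := fun i j => by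
    simp only [Pin, mul_diagonal]
    exact mul_nonneg (hAinn i j) (inv_nonneg.mpr (hdinpos j).le)
  have hdnonneg : ∀ j, 0 ≤ d j := fun j => by
    rw [hd, hdout]
    exact add_nonneg (hdinpos j).le (Finset.sum_nonneg fun i _ => hAoutn i j)
  have hbound : ∀ i j, (qmin • Pin) i j ≤ ((Ain + Aout) * diagonal fun j => (d j)⁻¹) i j := by
    intro i j
    rw [hdecomp]
    simp only [Matrix.smul_apply, smul_eq_mul, Matrix.add_apply, mul_diagonal]
    nlinarith [hqmin j, hPin i j, mul_nonneg (hAoutn i j) (inv_nonneg.mpr (hdnonneg j))]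
  have hscaled : ∀ i j, 0 ≤ (qmin • Pin) i j := fun i j => mul_nonneg hqmin0 (hPin i j)
  simpa [smul_pow, smul_mulVec] using pow_mulVec_le_pow_mulVec hscaled hbound hx t i

/-- With `A = A^in + A^out`, degrees `d j = din j + dout j`
(column sums, `din j > 0`), `P = A D⁻¹`, `P^in = A^in (D^in)⁻¹` and the diagonal
matrix `Q` with entries `q j = din j / d j`:
`P = P^in Q + A^out D⁻¹`, and consequently for every nonnegative vector `x`,
every `t ≥ 1` and every coordinate `i`, `q_min^t ((P^in)^t x)_i ≤ (P^t x)_i`. -/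
theorem transition_decomposition (n : ℕ) (Ain Aout : Matrix (Fin n) (Fin n) ℝ)
    (hAinn : ∀ i j, 0 ≤ Ain i j) (hAoutn : ∀ i j, 0 ≤ Aout i j)
    (din dout d q : Fin n → ℝ)
    (hdin : ∀ j, din j = ∑ i, Ain i j) (hdout : ∀ j, dout j = ∑ i, Aout i j)
    (hd : ∀ j, d j = din j + dout j) (hdinpos : ∀ j, 0 < din j)
    (hq : ∀ j, q j = din j / d j)
    (qmin : ℝ) (hqmin : ∀ j, qmin ≤ q j) (hqmin0 : 0 ≤ qmin) :
    (Ain + Aout) * Matrix.diagonal (fun j => (d j)⁻¹) =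
      (Ain * Matrix.diagonal fun j => (din j)⁻¹) * Matrix.diagonal q +
        Aout * Matrix.diagonal (fun j => (d j)⁻¹) ∧
    ∀ x : Fin n → ℝ, (∀ i, 0 ≤ x i) → ∀ t : ℕ, 1 ≤ t → ∀ i,
      qmin ^ t * (((Ain * Matrix.diagonal fun j => (din j)⁻¹) ^ t).mulVec x i) ≤
        (((Ain + Aout) * Matrix.diagonal fun j => (d j)⁻¹) ^ t).mulVec x i :=
  transition_decomposition_general n Ain Aout hAinn hAoutn din dout d q hdout hd hdinpos hq qmin
    hqmin hqmin0
end

section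
/- Let G be a graph with vertex set V, C ⊂ V, and decomposition A = A^in + A^out where A^in contains edges within C and within V\C and A^out contains edges between C and V\C. Suppose d_j^out ≤ ε d_j for all j. Let v^(0) = D 1_Γ with Γ ⊂ C and v^(t) = P^t v^(0) where P = A D^{-1}. Then the ℓ1-mass of v^(t) outside C satisfies ‖v^(t)|_{V\C}‖_1 ≤ t·ε·vol(Γ). -/
open Matrix Finset

/-!
`P = A D⁻¹` is column-stochastic, so it preserves the total mass `vol(Γ)` of the nonnegative
vectors `v⁽ᵗ⁾`. In one step the mass outside `C` can only stay outside, and of the mass sitting at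
`j ∈ C` at most the fraction `d_j^out / d_j ≤ ε` crosses to `V \ C`. Hence each step adds at most
`ε · vol(Γ)` to the mass outside `C`.
-/

namespace Matrix

variable {ι R : Type*} [Fintype ι] [DecidableEq ι]

section OrderedSemiring

variable [CommSemiring R] [PartialOrder R] [IsOrderedRing R] {P : Matrix ι ι R} {C : Finset ι}
  {ε : R}

lemma sum_le_one_of_mem_colStochastic (hP : P ∈ colStochastic R ι) (s : Finset ι) (j : ι) :
    ∑ i ∈ s, P i j ≤ 1 :=
  (sum_le_sum_of_subset_of_nonneg (subset_univ _) fun i _ _ => hP.1 i j).trans_eq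
    (sum_col_of_mem_colStochastic hP j)

lemma sum_compl_mulVec_le_of_mem_colStochastic (hP : P ∈ colStochastic R ι)
    (hleak : ∀ j ∈ C, ∑ i ∈ Cᶜ, P i j ≤ ε) (hε : 0 ≤ ε) {w : ι → R} (hw : ∀ i, 0 ≤ w i) :
    ∑ i ∈ Cᶜ, (P *ᵥ w) i ≤ ∑ i ∈ Cᶜ, w i + ε * ∑ i, w i := by
  calc ∑ i ∈ Cᶜ, (P *ᵥ w) i = ∑ j, (∑ i ∈ Cᶜ, P i j) * w j := by
        simp only [mulVec, dotProduct, sum_mul]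
        exact sum_comm
    _ = ∑ j ∈ C, (∑ i ∈ Cᶜ, P i j) * w j + ∑ j ∈ Cᶜ, (∑ i ∈ Cᶜ, P i j) * w j :=
        (sum_add_sum_compl C _).symm
    _ ≤ ∑ j ∈ C, ε * w j + ∑ j ∈ Cᶜ, 1 * w j := by
        gcongr with j hj j
        · exact hw j
        · exact hleak j hj
        · exact hw j
        · exact sum_le_one_of_mem_colStochastic hP Cᶜ j
    _ ≤ ∑ j ∈ Cᶜ, w j + ε * ∑ j, w j := by
        have hC : ∑ j ∈ C, w j ≤ ∑ j, w j :=
          sum_le_sum_of_subset_of_nonneg (subset_univ C) fun i _ _ => hw i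
        rw [← mul_sum, add_comm]
        simp only [one_mul]
        gcongr

lemma sum_compl_pow_mulVec_le_of_mem_colStochastic (hP : P ∈ colStochastic R ι)
    (hleak : ∀ j ∈ C, ∑ i ∈ Cᶜ, P i j ≤ ε) (hε : 0 ≤ ε) {v : ι → R} (hv : ∀ i, 0 ≤ v i)
    (t : ℕ) : ∑ i ∈ Cᶜ, (P ^ t *ᵥ v) i ≤ ∑ i ∈ Cᶜ, v i + t * ε * ∑ i, v i := by
  induction t with
  | zero => simp
  | succ t ih =>
    have hmass : ∑ i, (P ^ t *ᵥ v) i = ∑ i, v i := sum_mulVec_of_mem_colStochastic (pow_mem hP t)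
    calc ∑ i ∈ Cᶜ, (P ^ (t + 1) *ᵥ v) i = ∑ i ∈ Cᶜ, (P *ᵥ (P ^ t *ᵥ v)) i := by
          rw [pow_succ', mulVec_mulVec]
      _ ≤ ∑ i ∈ Cᶜ, (P ^ t *ᵥ v) i + ε * ∑ i, v i := by
          rw [← hmass]
          exact sum_compl_mulVec_le_of_mem_colStochastic hP hleak hε
            (nonneg_mulVec_of_mem_colStochastic (pow_mem hP t) hv)
      _ ≤ ∑ i ∈ Cᶜ, v i + t * ε * ∑ i, v i + ε * ∑ i, v i := by gcongr
      _ = ∑ i ∈ Cᶜ, v i + ↑(t + 1) * ε * ∑ i, v i := by push_cast; ring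

end OrderedSemiring

section Field

variable [Field R] [LinearOrder R] [IsStrictOrderedRing R] {A : Matrix ι ι R} {d : ι → R}

lemma mul_diagonal_inv_mem_colStochastic (hA : ∀ i j, 0 ≤ A i j) (hd : ∀ j, d j = ∑ i, A i j)
    (hd0 : ∀ j, d j ≠ 0) : A * diagonal (fun j => (d j)⁻¹) ∈ colStochastic R ι := by
  refine mem_colStochastic_iff_sum.2 ⟨fun i j => ?_, fun j => ?_⟩
  · rw [mul_diagonal]
    exact mul_nonneg (hA i j) (inv_nonneg.2 ((hd j).symm ▸ sum_nonneg fun i _ => hA i j))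
  · simp_rw [mul_diagonal, ← sum_mul, ← hd j]
    exact mul_inv_cancel₀ (hd0 j)

lemma sum_mul_diagonal_inv_le {s : Finset ι} {j : ι} {ε : R} (hd : 0 < d j)
    (h : ∑ i ∈ s, A i j ≤ ε * d j) : ∑ i ∈ s, (A * diagonal fun j => (d j)⁻¹) i j ≤ ε := by
  simp_rw [mul_diagonal, ← sum_mul, ← div_eq_mul_inv]
  exact (div_le_iff₀ hd).2 h

end Field

end Matrix

theorem diffusion_leakage_general (n : ℕ) (C : Finset (Fin n))
    (Ain Aout : Matrix (Fin n) (Fin n) ℝ)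
    (hAinn : ∀ i j, 0 ≤ Ain i j) (hAoutn : ∀ i j, 0 ≤ Aout i j)
    (hAin : ∀ i j, ¬(i ∈ C ↔ j ∈ C) → Ain i j = 0)
    (d : Fin n → ℝ) (hd : ∀ j, d j = ∑ i, (Ain + Aout) i j)
    (hdpos : ∀ j, 0 < d j)
    (ε : ℝ) (hε : ∀ j, ∑ i, Aout i j ≤ ε * d j)
    (Γ : Finset (Fin n)) (hΓ : Γ ⊆ C) (t : ℕ) :
    ∑ i ∈ Finset.univ \ C,
        |((((Ain + Aout) * Matrix.diagonal fun j => (d j)⁻¹) ^ t).mulVec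
          (fun i => if i ∈ Γ then d i else 0)) i| ≤
      (t : ℝ) * ε * ∑ i ∈ Γ, d i := by
  rcases isEmpty_or_nonempty (Fin n) with hn | ⟨⟨j₀⟩⟩
  · simp [eq_empty_of_isEmpty Γ]
  have hε0 : 0 ≤ ε :=
    nonneg_of_mul_nonneg_left ((sum_nonneg fun i _ => hAoutn i j₀).trans (hε j₀)) (hdpos j₀)
  have hP := mul_diagonal_inv_mem_colStochastic (A := Ain + Aout)
    (fun i j => add_nonneg (hAinn i j) (hAoutn i j)) hd fun j => (hdpos j).ne'
  have hleak : ∀ j ∈ C, ∑ i ∈ Cᶜ, ((Ain + Aout) * diagonal fun j => (d j)⁻¹) i j ≤ ε := by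
    intro j hj
    refine sum_mul_diagonal_inv_le (hdpos j) ?_
    calc ∑ i ∈ Cᶜ, (Ain + Aout) i j = ∑ i ∈ Cᶜ, Aout i j :=
          sum_congr rfl fun i hi => by
            rw [Matrix.add_apply, hAin i j (by simp_all), zero_add]
      _ ≤ ∑ i, Aout i j := sum_le_sum_of_subset_of_nonneg (subset_univ _) fun i _ _ => hAoutn i j
      _ ≤ ε * d j := hε j
  set v₀ : Fin n → ℝ := fun i => if i ∈ Γ then d i else 0
  have hv₀ : ∀ i, 0 ≤ v₀ i := fun i => by
    by_cases hi : i ∈ Γ <;> simp [v₀, hi, (hdpos i).le]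
  have hv₀_out : ∑ i ∈ Cᶜ, v₀ i = 0 :=
    sum_eq_zero fun i hi => if_neg fun h => mem_compl.1 hi (hΓ h)
  have hvol : ∑ i, v₀ i = ∑ i ∈ Γ, d i := by simp [v₀, sum_ite_mem]
  rw [← compl_eq_univ_sdiff]
  simp_rw [abs_of_nonneg (nonneg_mulVec_of_mem_colStochastic (pow_mem hP t) hv₀ _)]
  simpa [hv₀_out, hvol] using sum_compl_pow_mulVec_le_of_mem_colStochastic hP hleak hε0 hv₀ t

/-- Let `C ⊆ V` and `A = A^in + A^out`, where `A^in` only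
contains edges within `C` or within `V \ C`, and `A^out` only edges between `C`
and `V \ C` (all entries nonnegative).  Suppose `d_j^out ≤ ε d_j` for all `j`,
where `d j > 0` is the (column) degree.  Let `v⁽⁰⁾ = D 1_Γ` with `Γ ⊆ C` and
`v⁽ᵗ⁾ = Pᵗ v⁽⁰⁾` with `P = A D⁻¹`.  Then `‖v⁽ᵗ⁾|_{V \ C}‖₁ ≤ t ε vol(Γ)`. -/
theorem diffusion_leakage (n : ℕ) (C : Finset (Fin n))
    (Ain Aout : Matrix (Fin n) (Fin n) ℝ)
    (hAinn : ∀ i j, 0 ≤ Ain i j) (hAoutn : ∀ i j, 0 ≤ Aout i j)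
    (hAin : ∀ i j, ¬(i ∈ C ↔ j ∈ C) → Ain i j = 0)
    (hAout : ∀ i j, (i ∈ C ↔ j ∈ C) → Aout i j = 0)
    (d : Fin n → ℝ) (hd : ∀ j, d j = ∑ i, (Ain + Aout) i j)
    (hdpos : ∀ j, 0 < d j)
    (ε : ℝ) (hε : ∀ j, ∑ i, Aout i j ≤ ε * d j)
    (Γ : Finset (Fin n)) (hΓ : Γ ⊆ C) (t : ℕ) :
    ∑ i ∈ Finset.univ \ C,
        |((((Ain + Aout) * Matrix.diagonal fun j => (d j)⁻¹) ^ t).mulVec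
          (fun i => if i ∈ Γ then d i else 0)) i| ≤
      (t : ℝ) * ε * ∑ i ∈ Γ, d i :=
  diffusion_leakage_general n C Ain Aout hAinn hAoutn hAin d hd hdpos ε hε Γ hΓ t
end

section
/- Suppose Φ = Φ̂ + M are matrices with s-restricted isometry constants δ_s(Φ) and δ̂_s = δ_s(Φ̂), and let ε_Φ^s = ‖M‖_2^{(s)} / ‖Φ̂‖_2^{(s)} where ‖B‖_2^{(s)} = max_{|S|=s} ‖B_S‖_2. Then δ_s(Φ) ≤ (1 + δ̂_s)(1 + ε_Φ^s)² − 1. -/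
open Matrix

/-- The spectral norm (ℓ²-operator norm) of a real matrix. -/
noncomputable def opNorm {ι κ : Type*} [Fintype ι] [Fintype κ] [DecidableEq κ]
    (B : Matrix ι κ ℝ) : ℝ :=
  ‖LinearMap.toContinuousLinearMap (Matrix.toEuclideanLin B)‖

/-- `‖B‖₂^{(s)}`: the maximum spectral norm over column submatrices on `s` columns. -/
noncomputable def colOpNorm {m n : ℕ} (B : Matrix (Fin m) (Fin n) ℝ) (s : ℕ) : ℝ :=
  sSup {c : ℝ | ∃ S : Finset (Fin n), S.card = s ∧
    c = opNorm (B.submatrix id (Subtype.val : {j // j ∈ S} → Fin n))}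

/-!
Fix an `s`-sparse `x` and write `r = δ_s(Φ̂)`, `ε = ε_Φ^s`, `a = ‖x‖`. The restricted isometry
property of `Φ̂` gives `‖Φ̂_S‖ ≤ √(1 + r)` on every support `S` of size `s`, hence
`‖M x‖ ≤ ‖M‖₂^{(s)} a = ε ‖Φ̂‖₂^{(s)} a ≤ ε √(1 + r) a`. The triangle inequality then gives
`‖Φ x‖ ≤ (1 + ε) √(1 + r) a`, and Cauchy–Schwarz gives
`‖Φ x‖² ≥ ‖Φ̂ x‖² - 2 ‖Φ̂ x‖ ‖M x‖ ≥ (1 - r - 2ε(1 + r)) a² ≥ (2 - (1 + r)(1 + ε)²) a²`.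
Since the set of admissible constants is closed, `δ_s(Φ̂)` is itself admissible, and the two
bounds say that `(1 + r)(1 + ε)² - 1` is admissible for `Φ`.
-/

open WithLp (toLp)

lemma le_sqrt_mul_of_sq_le {t c a : ℝ} (ha : 0 ≤ a) (h : t ^ 2 ≤ c * a ^ 2) : t ≤ √c * a := by
  rw [← Real.sqrt_sq ha, ← Real.sqrt_mul' c (sq_nonneg a)]
  exact (le_abs_self t).trans (Real.abs_le_sqrt h)

lemma norm_add_sq_bounds_of_perturbation {E : Type*} [NormedAddCommGroup E]
    [InnerProductSpace ℝ E] {y z : E} {a r ε : ℝ} (hr : -1 ≤ r) (ha : 0 ≤ a)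
    (hy_lower : (1 - r) * a ^ 2 ≤ ‖y‖ ^ 2) (hy_upper : ‖y‖ ^ 2 ≤ (1 + r) * a ^ 2)
    (hz : ‖z‖ ≤ ε * √(1 + r) * a) :
    (1 - ((1 + r) * (1 + ε) ^ 2 - 1)) * a ^ 2 ≤ ‖y + z‖ ^ 2 ∧
      ‖y + z‖ ^ 2 ≤ (1 + ((1 + r) * (1 + ε) ^ 2 - 1)) * a ^ 2 := by
  have hv : √(1 + r) ^ 2 = 1 + r := Real.sq_sqrt (by linarith)
  have hy : ‖y‖ ≤ √(1 + r) * a := le_sqrt_mul_of_sq_le ha hy_upper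
  constructor
  · have hinner : -(‖y‖ * ‖z‖) ≤ inner ℝ y z := neg_le_of_abs_le (abs_real_inner_le_norm y z)
    have hyz : ‖y‖ * ‖z‖ ≤ √(1 + r) * a * (ε * √(1 + r) * a) :=
      mul_le_mul hy hz (norm_nonneg z) (by positivity)
    have hyz' : ‖y‖ * ‖z‖ ≤ ε * (1 + r) * a ^ 2 :=
      hyz.trans_eq (by linear_combination ε * a ^ 2 * hv)
    rw [norm_add_sq_real]
    nlinarith [mul_nonneg (mul_nonneg (sq_nonneg ε) (neg_le_iff_add_nonneg'.mp hr)) (sq_nonneg a),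
      sq_nonneg ‖z‖]
  · have htri : ‖y + z‖ ≤ √(1 + r) * (1 + ε) * a := by
      linarith [norm_add_le y z]
    calc ‖y + z‖ ^ 2 ≤ (√(1 + r) * (1 + ε) * a) ^ 2 := by gcongr
      _ = _ := by rw [mul_pow, mul_pow, hv]; ring

section RestrictedIsometry

variable {ι κ : Type*} [Fintype ι] [Fintype κ]

def SatisfiesRIP (Φ : Matrix ι κ ℝ) (s : ℕ) (δ : ℝ) : Prop :=
  0 ≤ δ ∧ ∀ x : κ → ℝ, (Function.support x).ncard ≤ s →
    (1 - δ) * ‖toLp 2 x‖ ^ 2 ≤ ‖toLp 2 (Φ *ᵥ x)‖ ^ 2 ∧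
      ‖toLp 2 (Φ *ᵥ x)‖ ^ 2 ≤ (1 + δ) * ‖toLp 2 x‖ ^ 2

lemma ric_eq_sInf_satisfiesRIP (Φ : Matrix ι κ ℝ) (s : ℕ) :
    ric Φ s = sInf {δ | SatisfiesRIP Φ s δ} := by
  simp only [ric, SatisfiesRIP, EuclideanSpace.real_norm_sq_eq]

lemma isClosed_setOf_satisfiesRIP (Φ : Matrix ι κ ℝ) (s : ℕ) :
    IsClosed {δ | SatisfiesRIP Φ s δ} := by
  simp only [SatisfiesRIP, Set.ofPred_and, Set.ofPred_forall]
  exact (isClosed_le continuous_const continuous_id).inter <| isClosed_iInter fun x =>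
    isClosed_iInter fun _ => (isClosed_le (by fun_prop) continuous_const).inter
      (isClosed_le continuous_const (by fun_prop))

lemma norm_toLp_mulVec_le [DecidableEq κ] (B : Matrix ι κ ℝ) (x : κ → ℝ) :
    ‖toLp 2 (B *ᵥ x)‖ ≤ opNorm B * ‖toLp 2 x‖ :=
  (LinearMap.toContinuousLinearMap (toEuclideanLin B)).le_opNorm (toLp 2 x)

lemma satisfiesRIP_opNorm_sq_add_one [DecidableEq κ] (Φ : Matrix ι κ ℝ) (s : ℕ) :
    SatisfiesRIP Φ s (opNorm Φ ^ 2 + 1) := by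
  refine ⟨by positivity, fun x _ => ⟨?_, ?_⟩⟩
  · nlinarith [sq_nonneg (opNorm Φ), sq_nonneg ‖toLp 2 x‖, sq_nonneg ‖toLp 2 (Φ *ᵥ x)‖]
  · calc ‖toLp 2 (Φ *ᵥ x)‖ ^ 2 ≤ (opNorm Φ * ‖toLp 2 x‖) ^ 2 := by
          gcongr; exact norm_toLp_mulVec_le Φ x
      _ ≤ (1 + (opNorm Φ ^ 2 + 1)) * ‖toLp 2 x‖ ^ 2 := by
          nlinarith [sq_nonneg ‖toLp 2 x‖]

lemma satisfiesRIP_ric (Φ : Matrix ι κ ℝ) (s : ℕ) : SatisfiesRIP Φ s (ric Φ s) := by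
  classical
  rw [ric_eq_sInf_satisfiesRIP]
  exact (isClosed_setOf_satisfiesRIP Φ s).csInf_mem ⟨_, satisfiesRIP_opNorm_sq_add_one Φ s⟩
    ⟨0, fun _ h => h.1⟩

lemma ric_le_of_satisfiesRIP {Φ : Matrix ι κ ℝ} {s : ℕ} {δ : ℝ} (h : SatisfiesRIP Φ s δ) :
    ric Φ s ≤ δ := by
  rw [ric_eq_sInf_satisfiesRIP]
  exact csInf_le ⟨0, fun _ h => h.1⟩ h

end RestrictedIsometry

section ColumnSubmatrix

lemma submatrix_mulVec_restrict {ι κ : Type*} [Fintype κ] (B : Matrix ι κ ℝ) {S : Finset κ}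
    {x : κ → ℝ} (hx : ∀ j ∉ S, x j = 0) :
    B.submatrix id (Subtype.val : S → κ) *ᵥ (fun j => x j) = B *ᵥ x := by
  funext i
  simp only [mulVec, dotProduct, submatrix_apply, id_eq]
  rw [Finset.sum_coe_sort S (fun j => B i j * x j)]
  exact Finset.sum_subset (Finset.subset_univ S) fun j _ hj => by rw [hx j hj, mul_zero]

lemma norm_toLp_restrict {κ : Type*} [Fintype κ] {S : Finset κ} {x : κ → ℝ}
    (hx : ∀ j ∉ S, x j = 0) :
    ‖toLp 2 (fun j : S => x j)‖ = ‖toLp 2 x‖ := by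
  simp only [EuclideanSpace.norm_eq]
  rw [Finset.sum_coe_sort S (fun j => ‖x j‖ ^ 2)]
  congr 1
  exact Finset.sum_subset (Finset.subset_univ S) fun j _ hj => by simp [hx j hj]

lemma exists_card_eq_of_ncard_support_le {κ : Type*} [Fintype κ] {x : κ → ℝ} {s : ℕ}
    (hx : (Function.support x).ncard ≤ s) (hs : s ≤ Fintype.card κ) :
    ∃ S : Finset κ, S.card = s ∧ ∀ j ∉ S, x j = 0 := by
  classical
  obtain ⟨S, hsupp, -, hcard⟩ := Finset.exists_subsuperset_card_eq (n := s)
    (Finset.subset_univ (Function.support x).toFinset)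
    (by rwa [← Set.ncard_eq_toFinset_card']) (by simpa using hs)
  exact ⟨S, hcard, fun j hj => by simpa using mt (@hsupp j) hj⟩

variable {m n : ℕ}

lemma colOpNorm_nonneg (B : Matrix (Fin m) (Fin n) ℝ) (s : ℕ) : 0 ≤ colOpNorm B s :=
  Real.sSup_nonneg fun _ ⟨_, _, hc⟩ => hc ▸ norm_nonneg _

lemma opNorm_submatrix_le_colOpNorm (B : Matrix (Fin m) (Fin n) ℝ) {S : Finset (Fin n)}
    {s : ℕ} (hS : S.card = s) :
    opNorm (B.submatrix id (Subtype.val : S → Fin n)) ≤ colOpNorm B s := by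
  have hbdd : BddAbove {c : ℝ | ∃ S : Finset (Fin n), S.card = s ∧
      c = opNorm (B.submatrix id (Subtype.val : S → Fin n))} :=
    ((Set.finite_range fun S : Finset (Fin n) =>
      opNorm (B.submatrix id (Subtype.val : S → Fin n))).subset
        (by rintro _ ⟨S, -, rfl⟩; exact ⟨S, rfl⟩)).bddAbove
  exact le_csSup hbdd ⟨S, hS, rfl⟩

lemma norm_mulVec_le_colOpNorm {s : ℕ} (hsn : s ≤ n) (B : Matrix (Fin m) (Fin n) ℝ)
    {x : Fin n → ℝ} (hx : (Function.support x).ncard ≤ s) :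
    ‖toLp 2 (B *ᵥ x)‖ ≤ colOpNorm B s * ‖toLp 2 x‖ := by
  obtain ⟨S, hS, hxS⟩ :=
    exists_card_eq_of_ncard_support_le hx (hsn.trans_eq (Fintype.card_fin n).symm)
  rw [← submatrix_mulVec_restrict B hxS, ← norm_toLp_restrict hxS]
  exact (norm_toLp_mulVec_le _ _).trans
    (by gcongr; exact opNorm_submatrix_le_colOpNorm B hS)

lemma colOpNorm_le {s : ℕ} (hsn : s ≤ n) {B : Matrix (Fin m) (Fin n) ℝ} {C : ℝ} (hC : 0 ≤ C)
    (h : ∀ x : Fin n → ℝ, (Function.support x).ncard ≤ s →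
      ‖toLp 2 (B *ᵥ x)‖ ≤ C * ‖toLp 2 x‖) :
    colOpNorm B s ≤ C := by
  rw [colOpNorm]
  obtain ⟨S₀, -, hS₀⟩ := Finset.exists_subset_card_eq (s := (Finset.univ : Finset (Fin n)))
    (n := s) (by rwa [Finset.card_univ, Fintype.card_fin])
  refine csSup_le ⟨_, S₀, hS₀, rfl⟩ ?_
  rintro _ ⟨S, rfl, rfl⟩
  refine ContinuousLinearMap.opNorm_le_bound _ hC fun y => ?_
  set x : Fin n → ℝ := fun j => if hj : j ∈ S then y ⟨j, hj⟩ else 0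
  have hxS : ∀ j ∉ S, x j = 0 := fun j hj => dif_neg hj
  have hxy : toLp 2 (fun j : S => x j) = y := by ext j; exact dif_pos j.2
  have hx : (Function.support x).ncard ≤ S.card := by
    rw [← Set.ncard_coe_finset]
    exact Set.ncard_le_ncard (fun j hj => by_contra fun h => hj (hxS j h)) S.finite_toSet
  rw [← hxy]
  calc _ = ‖toLp 2 (B *ᵥ x)‖ := by
        show ‖toLp 2 (B.submatrix id Subtype.val *ᵥ fun j : S => x j)‖ = _
        rw [submatrix_mulVec_restrict B hxS]
    _ ≤ C * ‖toLp 2 x‖ := h x hx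
    _ = C * ‖toLp 2 (fun j : S => x j)‖ := by rw [norm_toLp_restrict hxS]

end ColumnSubmatrix

theorem ric_perturbation_general (m n s : ℕ) (hsn : s ≤ n)
    (Φ Φhat M : Matrix (Fin m) (Fin n) ℝ) (hΦ : Φ = Φhat + M)
    (hpos : 0 < colOpNorm Φhat s) :
    ric Φ s ≤ (1 + ric Φhat s) * (1 + colOpNorm M s / colOpNorm Φhat s) ^ 2 - 1 := by
  set r := ric Φhat s
  set ε := colOpNorm M s / colOpNorm Φhat s
  obtain ⟨hr, hΦhat⟩ := satisfiesRIP_ric Φhat s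
  have hε : 0 ≤ ε := div_nonneg (colOpNorm_nonneg M s) hpos.le
  have hΦhat_le : colOpNorm Φhat s ≤ √(1 + r) :=
    colOpNorm_le hsn (Real.sqrt_nonneg _) fun x hx =>
      le_sqrt_mul_of_sq_le (norm_nonneg _) (hΦhat x hx).2
  have hM : ∀ x : Fin n → ℝ, (Function.support x).ncard ≤ s →
      ‖toLp 2 (M *ᵥ x)‖ ≤ ε * √(1 + r) * ‖toLp 2 x‖ := fun x hx => calc
    _ ≤ colOpNorm M s * ‖toLp 2 x‖ := norm_mulVec_le_colOpNorm hsn M hx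
    _ = ε * colOpNorm Φhat s * ‖toLp 2 x‖ := by rw [div_mul_cancel₀ _ hpos.ne']
    _ ≤ ε * √(1 + r) * ‖toLp 2 x‖ := by gcongr
  refine ric_le_of_satisfiesRIP ⟨by nlinarith [sq_nonneg ε], fun x hx => ?_⟩
  rw [hΦ, add_mulVec, WithLp.toLp_add]
  exact norm_add_sq_bounds_of_perturbation (by linarith) (norm_nonneg _) (hΦhat x hx).1
    (hΦhat x hx).2 (hM x hx)

/-- Herman–Strohmer perturbation bound.  If `Φ = Φ̂ + M` and
`ε_Φ^s = ‖M‖₂^{(s)} / ‖Φ̂‖₂^{(s)}`, then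
`δ_s(Φ) ≤ (1 + δ_s(Φ̂)) (1 + ε_Φ^s)² - 1`. -/
theorem ric_perturbation (m n s : ℕ) (hs1 : 1 ≤ s) (hsn : s ≤ n)
    (Φ Φhat M : Matrix (Fin m) (Fin n) ℝ) (hΦ : Φ = Φhat + M)
    (hpos : 0 < colOpNorm Φhat s) :
    ric Φ s ≤ (1 + ric Φhat s) * (1 + colOpNorm M s / colOpNorm Φhat s) ^ 2 - 1 :=
  ric_perturbation_general m n s hsn Φ Φhat M hΦ hpos
end
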